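/- For odd N ≥ 3 and every n ∈ ℕ, the Bernoulli polynomial B_{2n} satisfies the eigenvalue relation of the multi-tent map of slope ±N: N^{2n−1}·[B_{2n}(y/N) + B_{2n}((2−y)/N) + B_{2n}((2+y)/N) + ... + B_{2n}((y + N − 1)/N)] = B_{2n}(y) for all y ∈ [0,1], where the arguments range over the N preimages y/N, (2−y)/N, (2+y)/N, (4−y)/N, ..., ((N−1)+y)/N. -/

import Mathlib

/-!
Write `N = 2h + 1`. The reflection `x ↦ 1 - x`, under which `B_{2n}` is invariant, sends the
preimage `(2j + 2 - y)/N` of the tent map to `(y + 2(h - 1 - j) + 1)/N`, so the `N` tent-map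
preimages contribute exactly the terms `B_{2n}((y + k)/N)`, `k < N`, of the Bernoulli
multiplication theorem `B_m(y) = N^{m-1} ∑_{k<N} B_m((y + k)/N)`.
-/

open Finset

theorem Finset.sum_range_two_mul_add_one {M : Type*} [AddCommMonoid M] (f : ℕ → M) (h : ℕ) :
    ∑ k ∈ range (2 * h + 1), f k = f 0 + ∑ j ∈ range h, (f (2 * j + 1) + f (2 * j + 2)) := by
  induction h with
  | zero => simp
  | succ h ih =>
    rw [show 2 * (h + 1) + 1 = 2 * h + 1 + 1 + 1 by ring, sum_range_succ, sum_range_succ, ih,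
      sum_range_succ, add_assoc, add_assoc]

theorem Polynomial.aeval_bernoulli_eq_bernoulliFun (k : ℕ) (x : ℝ) :
    aeval x (bernoulli k) = bernoulliFun k x := by
  rw [aeval_def, eval₂_eq_eval_map, bernoulliFun]

theorem bernoulliFun_one_sub_of_even {k : ℕ} (hk : Even k) (x : ℝ) :
    bernoulliFun k (1 - x) = bernoulliFun k x := by
  rw [bernoulliFun_eval_one_sub, hk.neg_one_pow, one_mul]

theorem bernoulliFun_eq_sum_add_div (k : ℕ) {N : ℕ} (hN : N ≠ 0) (y : ℝ) :
    bernoulliFun k y = N ^ k / N * ∑ i ∈ range N, bernoulliFun k ((y + i) / N) := by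
  have hN' : (N : ℝ) ≠ 0 := Nat.cast_ne_zero.mpr hN
  simpa [mul_div_cancel₀ y hN', add_div] using bernoulliFun_mul k hN (y / N)

theorem sum_tent_preimages_eq_sum_range {g : ℝ → ℝ} (hg : ∀ x, g (1 - x) = g x) {N h : ℕ}
    (hN : N = 2 * h + 1) (y : ℝ) :
    g (y / N) + ∑ j ∈ range h, (g ((2 * (j : ℝ) + 2 - y) / N) + g ((2 * (j : ℝ) + 2 + y) / N)) =
      ∑ k ∈ range N, g ((y + k) / N) := by
  subst hN
  have reflect : ∀ j ∈ range h, g ((2 * (j : ℝ) + 2 - y) / ↑(2 * h + 1)) =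
      g ((y + ↑(2 * (h - 1 - j) + 1)) / ↑(2 * h + 1)) := by
    intro j hj
    obtain ⟨d, rfl⟩ : ∃ d, h = j + 1 + d := ⟨h - 1 - j, by grind⟩
    rw [← hg, show j + 1 + d - 1 - j = d by omega]
    congr 1
    field_simp
    push_cast
    ring
  rw [sum_range_two_mul_add_one, sum_add_distrib, sum_congr rfl reflect,
    sum_range_reflect (fun j => g ((y + ↑(2 * j + 1)) / ↑(2 * h + 1))), ← sum_add_distrib]
  push_cast
  simp only [add_comm y, zero_add]

theorem bernoulli_eigenfunction_odd_general (N : ℕ) (hNodd : Odd N)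
    (n : ℕ) (y : ℝ) :
    (N : ℝ) ^ (2 * (n : ℤ) - 1) *
        ((Polynomial.aeval (y / N) (Polynomial.bernoulli (2 * n)) : ℝ) +
          ∑ j ∈ Finset.range ((N - 1) / 2),
            ((Polynomial.aeval (((2 * (j : ℝ) + 2) - y) / N)
                (Polynomial.bernoulli (2 * n)) : ℝ) +
              (Polynomial.aeval (((2 * (j : ℝ) + 2) + y) / N)
                (Polynomial.bernoulli (2 * n)) : ℝ))) =
      (Polynomial.aeval y (Polynomial.bernoulli (2 * n)) : ℝ) := by
  obtain ⟨h, hN⟩ := hNodd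
  have hN0 : N ≠ 0 := by omega
  have hpow : (N : ℝ) ^ (2 * (n : ℤ) - 1) = N ^ (2 * n) / N := by
    rw [show 2 * (n : ℤ) = ((2 * n : ℕ) : ℤ) by push_cast; rfl,
      zpow_sub_one₀ (Nat.cast_ne_zero.mpr hN0), zpow_natCast, div_eq_mul_inv]
  simp only [Polynomial.aeval_bernoulli_eq_bernoulliFun]
  rw [show (N - 1) / 2 = h by omega, hpow,
    sum_tent_preimages_eq_sum_range (bernoulliFun_one_sub_of_even (even_two_mul n)) hN,
    ← bernoulliFun_eq_sum_add_div _ hN0]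

/-- For odd `N ≥ 3`, the Bernoulli polynomial `B_{2n}` is an eigenfunction of
the Perron–Frobenius operator of the multi-tent map of slope `±N` with
eigenvalue `N^{-2n}`: summing `B_{2n}` over the `N` preimages
`y/N, (2-y)/N, (2+y)/N, ..., ((N-1)+y)/N` gives `N^{2n-1} · Σ = B_{2n}(y)`. -/
theorem bernoulli_eigenfunction_odd (N : ℕ) (hN : 3 ≤ N) (hNodd : Odd N)
    (n : ℕ) (y : ℝ) (hy : y ∈ Set.Icc (0 : ℝ) 1) :
    (N : ℝ) ^ (2 * (n : ℤ) - 1) *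
        ((Polynomial.aeval (y / N) (Polynomial.bernoulli (2 * n)) : ℝ) +
          ∑ j ∈ Finset.range ((N - 1) / 2),
            ((Polynomial.aeval (((2 * (j : ℝ) + 2) - y) / N)
                (Polynomial.bernoulli (2 * n)) : ℝ) +
              (Polynomial.aeval (((2 * (j : ℝ) + 2) + y) / N)
                (Polynomial.bernoulli (2 * n)) : ℝ))) =
      (Polynomial.aeval y (Polynomial.bernoulli (2 * n)) : ℝ) :=
  bernoulli_eigenfunction_odd_general N hNodd n y
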